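/- arXiv:1507.07289 — 2 statements merged into one kernel-verified Lean document; each statement's English description precedes it below -/
import Mathlib

section
/- Gauge bound from Feynman-Kac representation: suppose for an increasing sequence of stopping times $T_m\uparrow\tau_C$ (a.s. finite) one has $u(x)=\mathbb{E}^x[e_q(T_m)u(X_{T_m})]$ for all $m$, where $e_q(t)=\exp(\int_0^t q(X_s)ds)$, $u$ is bounded, and $\inf_C u>0$. Then $\mathbb{E}^x[e_q(\tau_C)]\leq \frac{\sup_C u}{\inf_C u}<\infty$. -/
open MeasureTheory Filter

/-- Gauge bound from the Feynman-Kac representation (Proposition 2.4):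
if `u x = E^x[e_q(T_m) u(X_{T_m})]` for all `m`, where `E m ω = e_q(T_m)(ω) ≥ 0`
converges a.s. to `Elim ω = e_q(τ_C)(ω)`, and the values `U m ω = u(X_{T_m})(ω)`
lie in `[a, b]` with `a = inf_C u > 0` and `b = sup_C u`, then
`E^x[e_q(τ_C)] ≤ b / a < ∞`. -/
theorem stmt_9 {Ω : Type*} [MeasurableSpace Ω] (μ : Measure Ω)
    [IsProbabilityMeasure μ]
    (E : ℕ → Ω → ℝ) (Elim : Ω → ℝ)
    (hEmeas : ∀ m, Measurable (E m)) (hE0 : ∀ m ω, 0 ≤ E m ω)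
    (hconv : ∀ᵐ ω ∂μ, Tendsto (fun m => E m ω) atTop (nhds (Elim ω)))
    (U : ℕ → Ω → ℝ) (a b : ℝ) (ha : 0 < a)
    (hU : ∀ m ω, a ≤ U m ω ∧ U m ω ≤ b)
    (hint : ∀ m, Integrable (fun ω => E m ω * U m ω) μ)
    (ux : ℝ) (hux : a ≤ ux ∧ ux ≤ b)
    (hrep : ∀ m, ∫ ω, E m ω * U m ω ∂μ = ux) :
    ∫⁻ ω, ENNReal.ofReal (Elim ω) ∂μ ≤ ENNReal.ofReal (b / a) := by
  -- Each E m is integrable since a * E m ≤ E m * U m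
  have hEint : ∀ m, Integrable (E m) μ := by
    intro m
    have : Integrable (fun ω => a⁻¹ * (E m ω * U m ω)) μ := (hint m).const_mul _
    refine this.mono' ((hEmeas m).aestronglyMeasurable) ?_
    filter_upwards with ω
    rw [Real.norm_eq_abs, abs_of_nonneg (hE0 m ω)]
    rw [← mul_assoc]
    have h1 : E m ω = a⁻¹ * a * E m ω := by field_simp
    calc E m ω = a⁻¹ * a * E m ω := h1
      _ ≤ a⁻¹ * E m ω * U m ω := by
          rw [mul_assoc, mul_assoc]
          exact mul_le_mul_of_nonneg_left
            (mul_le_mul_of_nonneg_right (hU m ω).1 (hE0 m ω) |>.trans_eq (mul_comm _ _))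
            (inv_nonneg.2 ha.le)
  -- ∫ E m ≤ b / a
  have hbound : ∀ m, ∫ ω, E m ω ∂μ ≤ b / a := by
    intro m
    have h1 : a * ∫ ω, E m ω ∂μ ≤ ux := by
      rw [← hrep m, ← integral_const_mul]
      refine integral_mono_ae ((hEint m).const_mul a) (hint m) ?_
      filter_upwards with ω
      calc a * E m ω = E m ω * a := mul_comm _ _
        _ ≤ E m ω * U m ω := mul_le_mul_of_nonneg_left (hU m ω).1 (hE0 m ω)
    have h2 : a * ∫ ω, E m ω ∂μ ≤ b := h1.trans hux.2
    rw [le_div_iff₀ ha]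
    linarith [h2]
  -- lintegral bound
  have hlbound : ∀ m, ∫⁻ ω, ENNReal.ofReal (E m ω) ∂μ ≤ ENNReal.ofReal (b / a) := by
    intro m
    rw [← ofReal_integral_eq_lintegral_ofReal (hEint m)
      (Filter.Eventually.of_forall (hE0 m))]
    exact ENNReal.ofReal_le_ofReal (hbound m)
  -- Fatou
  calc ∫⁻ ω, ENNReal.ofReal (Elim ω) ∂μ
      = ∫⁻ ω, liminf (fun m => ENNReal.ofReal (E m ω)) atTop ∂μ := by
        refine lintegral_congr_ae ?_
        filter_upwards [hconv] with ω hω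
        exact (((ENNReal.continuous_ofReal.tendsto _).comp hω).liminf_eq).symm
    _ ≤ liminf (fun m => ∫⁻ ω, ENNReal.ofReal (E m ω) ∂μ) atTop :=
        lintegral_liminf_le (fun m => (hEmeas m).ennreal_ofReal)
    _ ≤ ENNReal.ofReal (b / a) :=
        liminf_le_of_le (by isBoundedDefault)
          (fun c hc => by
            obtain ⟨m, hm⟩ := hc.exists
            exact hm.trans (hlbound m))
end

section
/- Let $(T_m)$ be an increasing sequence of stopping times bounded by $\tau_C$ where $C=C_1\cup C_2$ is a union of two open balls, with $X_{T_{2n-1}}\in\partial C_1$ and $X_{T_{2n}}\in\partial C_2$ whenever $T_m<\tau_C$. If $X$ has left limits, $\tau_C<\infty$ a.s., and $\partial C_1\cap\partial C_2\subset C^c$, then $\lim_{m\to\infty}T_m=\tau_C$ almost surely. -/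
open MeasureTheory Filter

/-- Pathwise convergence of the alternating exit times (Proposition 2.5):
if the increasing times `T m ≤ τ` satisfy `X_{T_{2n-1}} ∈ ∂C₁`,
`X_{T_{2n}} ∈ ∂C₂` whenever they are `< τ`, the path stays in `C = C₁ ∪ C₂`
before `τ`, and the path is continuous from the left along the times `T m`
(quasi-left-continuity), then `T m → τ`. -/
theorem stmt_19 (d : ℕ) (X : ℝ → EuclideanSpace ℝ (Fin d))
    (C₁ C₂ : Set (EuclideanSpace ℝ (Fin d)))
    (hC₁ : IsOpen C₁) (hC₂ : IsOpen C₂) (hinter : (C₁ ∩ C₂).Nonempty)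
    (hbdry : frontier C₁ ∩ frontier C₂ ⊆ (C₁ ∪ C₂)ᶜ)
    (τ : ℝ) (hτ : 0 ≤ τ)
    (T : ℕ → ℝ) (hmono : Monotone T) (hT0 : ∀ m, 0 ≤ T m) (hTτ : ∀ m, T m ≤ τ)
    (hodd : ∀ n : ℕ, 1 ≤ n → T (2 * n - 1) < τ →
      X (T (2 * n - 1)) ∈ frontier C₁)
    (heven : ∀ n : ℕ, 1 ≤ n → T (2 * n) < τ → X (T (2 * n)) ∈ frontier C₂)
    (hin : ∀ t, 0 ≤ t → t < τ → X t ∈ C₁ ∪ C₂)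
    (hql : ∀ s : ℝ, (∀ m, T m < s) → Tendsto T atTop (nhds s) →
      Tendsto (fun m => X (T m)) atTop (nhds (X s))) :
    Tendsto T atTop (nhds τ) := by
  have hbdd : BddAbove (Set.range T) := ⟨τ, by rintro x ⟨m, rfl⟩; exact hTτ m⟩
  set s := ⨆ m, T m with hs
  have hTs : ∀ m, T m ≤ s := fun m => le_ciSup hbdd m
  have hsτ : s ≤ τ := ciSup_le hTτ
  have htend : Tendsto T atTop (nhds s) := tendsto_atTop_ciSup hmono hbdd
  rcases eq_or_lt_of_le hsτ with h | h
  · rwa [h] at htend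
  · exfalso
    have hs0 : 0 ≤ s := le_trans (hT0 0) (hTs 0)
    have hXs : X s ∈ C₁ ∪ C₂ := hin s hs0 h
    have hfront : X s ∈ frontier C₁ ∩ frontier C₂ := by
      by_cases hall : ∀ m, T m < s
      · have hXtend := hql s hall htend
        have h1 : Tendsto (fun n => X (T (2 * n - 1))) atTop (nhds (X s)) :=
          hXtend.comp (tendsto_atTop_atTop.mpr (fun b => ⟨b + 1, fun n hn => by omega⟩))
        have h2 : Tendsto (fun n => X (T (2 * n))) atTop (nhds (X s)) :=
          hXtend.comp (tendsto_atTop_atTop.mpr (fun b => ⟨b, fun n hn => by omega⟩))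
        constructor
        · exact isClosed_frontier.mem_of_tendsto h1
            (eventually_atTop.mpr ⟨1, fun n hn => hodd n hn (lt_trans (hall _) h)⟩)
        · exact isClosed_frontier.mem_of_tendsto h2
            (eventually_atTop.mpr ⟨1, fun n hn => heven n hn (lt_trans (hall _) h)⟩)
      · push_neg at hall
        obtain ⟨m, hm⟩ := hall
        have hms : T m = s := le_antisymm (hTs m) hm
        have hconst : ∀ k, m ≤ k → T k = s :=
          fun k hk => le_antisymm (hTs k) (hms ▸ hmono hk)
        have hodd' := hodd (m + 1) (by omega)
          (by rw [hconst (2 * (m + 1) - 1) (by omega)]; exact h)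
        have heven' := heven (m + 1) (by omega)
          (by rw [hconst (2 * (m + 1)) (by omega)]; exact h)
        rw [hconst (2 * (m + 1) - 1) (by omega)] at hodd'
        rw [hconst (2 * (m + 1)) (by omega)] at heven'
        exact ⟨hodd', heven'⟩
    exact hbdry hfront hXs
end
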